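/- The bilinear map {f,g}₂ on smooth functions of (Q,P,q*,p*,ψ*) ∈ ℝ^d × ℝ^d × ℝ^d × ℝ^d × ℝ defined by {f,g}₂ = ∑_μ (∂f/∂Z^μ ∂g/∂z*_μ − ∂g/∂Z^μ ∂f/∂z*_μ) − ψ* ∑_i (∂f/∂q*_i ∂g/∂p*_i − ∂g/∂q*_i ∂f/∂p*_i), where Z = (Q,P) and z* = (q*,p*), is antisymmetric and satisfies the Jacobi identity {f,{g,h}₂}₂ + {g,{h,f}₂}₂ + {h,{f,g}₂}₂ = 0; hence it defines a Poisson bracket. -/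

import Mathlib

open Finset

/-- The reduced single-decorated-particle phase space with `k = 2`:
`(Q, P, q*, p*, ψ*) ∈ ℝ^d × ℝ^d × ℝ^d × ℝ^d × ℝ`. -/
abbrev SWSpace (d : ℕ) :=
  (Fin d → ℝ) × (Fin d → ℝ) × (Fin d → ℝ) × (Fin d → ℝ) × ℝ

/-- The reduced Scovel–Weinstein bracket (`k = 2`):
`{f,g}₂ = ∑_μ (∂f/∂Z^μ ∂g/∂z*_μ − ∂g/∂Z^μ ∂f/∂z*_μ)
  − ψ* ∑_i (∂f/∂q*_i ∂g/∂p*_i − ∂g/∂q*_i ∂f/∂p*_i)`,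
where `Z = (Q,P)` and `z* = (q*,p*)`. -/
noncomputable def swBr (d : ℕ) (f g : SWSpace d → ℝ) : SWSpace d → ℝ := fun x =>
  (∑ i : Fin d,
    (fderiv ℝ f x (Pi.single i 1, 0, 0, 0, 0) * fderiv ℝ g x (0, 0, Pi.single i 1, 0, 0) -
      fderiv ℝ g x (Pi.single i 1, 0, 0, 0, 0) * fderiv ℝ f x (0, 0, Pi.single i 1, 0, 0))) +
  (∑ i : Fin d,
    (fderiv ℝ f x (0, Pi.single i 1, 0, 0, 0) * fderiv ℝ g x (0, 0, 0, Pi.single i 1, 0) -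
      fderiv ℝ g x (0, Pi.single i 1, 0, 0, 0) * fderiv ℝ f x (0, 0, 0, Pi.single i 1, 0))) -
  x.2.2.2.2 *
    ∑ i : Fin d,
      (fderiv ℝ f x (0, 0, Pi.single i 1, 0, 0) * fderiv ℝ g x (0, 0, 0, Pi.single i 1, 0) -
        fderiv ℝ g x (0, 0, Pi.single i 1, 0, 0) * fderiv ℝ f x (0, 0, 0, Pi.single i 1, 0))

/-! ### Auxiliary setup: structure coefficients and an abstract form of the bracket -/

abbrev SWIdx (d : ℕ) := Fin d ⊕ Fin d ⊕ Fin d ⊕ Fin d ⊕ Unit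

def swE {d : ℕ} : SWIdx d → SWSpace d
  | .inl i => (Pi.single i 1, 0, 0, 0, 0)
  | .inr (.inl i) => (0, Pi.single i 1, 0, 0, 0)
  | .inr (.inr (.inl i)) => (0, 0, Pi.single i 1, 0, 0)
  | .inr (.inr (.inr (.inl i))) => (0, 0, 0, Pi.single i 1, 0)
  | .inr (.inr (.inr (.inr _))) => (0, 0, 0, 0, 1)

def κ₀ {d : ℕ} : SWIdx d → SWIdx d → ℝ
  | .inl i, .inr (.inr (.inl j)) => if i = j then 1 else 0
  | .inr (.inr (.inl i)), .inl j => if i = j then -1 else 0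
  | .inr (.inl i), .inr (.inr (.inr (.inl j))) => if i = j then 1 else 0
  | .inr (.inr (.inr (.inl i))), .inr (.inl j) => if i = j then -1 else 0
  | _, _ => 0

def κ₁ {d : ℕ} : SWIdx d → SWIdx d → ℝ
  | .inr (.inr (.inl i)), .inr (.inr (.inr (.inl j))) => if i = j then -1 else 0
  | .inr (.inr (.inr (.inl i))), .inr (.inr (.inl j)) => if i = j then 1 else 0
  | _, _ => 0

noncomputable def ψL (d : ℕ) : SWSpace d →L[ℝ] ℝ :=
  (ContinuousLinearMap.snd ℝ _ ℝ).comp ((ContinuousLinearMap.snd ℝ _ _).comp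
    ((ContinuousLinearMap.snd ℝ _ _).comp (ContinuousLinearMap.snd ℝ (Fin d → ℝ) _)))

@[simp] theorem ψL_apply {d : ℕ} (x : SWSpace d) : ψL d x = x.2.2.2.2 := rfl

noncomputable def swπ {d : ℕ} (a b : SWIdx d) : SWSpace d → ℝ :=
  fun x => κ₀ a b + κ₁ a b * x.2.2.2.2

noncomputable def swD {d : ℕ} (f : SWSpace d → ℝ) (v : SWSpace d) : SWSpace d → ℝ :=
  fun x => fderiv ℝ f x v

noncomputable def br {d : ℕ} (f g : SWSpace d → ℝ) : SWSpace d → ℝ := fun x =>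
  ∑ a : SWIdx d, ∑ b : SWIdx d, swπ a b x * swD f (swE a) x * swD g (swE b) x

theorem swπ_antisymm {d : ℕ} (a b : SWIdx d) (x : SWSpace d) : swπ a b x = - swπ b a x := by
  rcases a with i | i | i | i | u <;> rcases b with j | j | j | j | v <;>
    simp [swπ, κ₀, κ₁] <;> split_ifs <;> simp_all

theorem swπ_mul_key {d : ℕ} (a b c e : SWIdx d) (x : SWSpace d) :
    swπ a b x * (κ₁ c e * (swE b).2.2.2.2) = 0 := by
  rcases b with i | i | i | i | u
  · simp [swE]
  · simp [swE]
  · simp [swE]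
  · simp [swE]
  · rcases a with i | i | i | i | v <;> simp [swπ, κ₀, κ₁]

/-- `{f,g}₂` agrees with the abstract bracket `br`. -/
theorem swBr_eq_br {d : ℕ} (f g : SWSpace d → ℝ) : swBr d f g = br f g := by
  funext x
  simp only [br, Fintype.sum_sum_type, swπ, swD, swE, κ₀, κ₁]
  simp only [ite_mul, one_mul, neg_one_mul, zero_mul, mul_ite, mul_one, mul_zero, mul_neg,
    add_zero, zero_add, Finset.sum_ite_eq, Finset.sum_ite_eq', Finset.mem_univ, if_true,
    Finset.sum_add_distrib, Finset.sum_const_zero, Finset.sum_neg_distrib]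
  simp only [swBr]
  rw [Finset.mul_sum]
  simp only [Finset.sum_sub_distrib, mul_sub, neg_mul, Finset.sum_neg_distrib, neg_neg]
  simp only [mul_comm, mul_left_comm, mul_assoc]
  ring

theorem swD_contDiff {d : ℕ} {f : SWSpace d → ℝ} (hf : ContDiff ℝ (⊤:ℕ∞) f) (v : SWSpace d) :
    ContDiff ℝ (⊤:ℕ∞) (swD f v) :=
  (hf.fderiv_right (by simp)).clm_apply contDiff_const

theorem hasFDerivAt_swD {d : ℕ} {f : SWSpace d → ℝ} (hf : ContDiff ℝ (⊤:ℕ∞) f) (v : SWSpace d)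
    (x : SWSpace d) :
    HasFDerivAt (swD f v) ((ContinuousLinearMap.apply ℝ ℝ v).comp
      (fderiv ℝ (fderiv ℝ f) x)) x := by
  have h2 : HasFDerivAt (fderiv ℝ f) (fderiv ℝ (fderiv ℝ f) x) x :=
    (((hf.fderiv_right (by simp : ((⊤:ℕ∞):WithTop ℕ∞) + 1 ≤ (⊤:ℕ∞))).differentiable
      (by simp)) x).hasFDerivAt
  exact (ContinuousLinearMap.apply ℝ ℝ v).hasFDerivAt.comp x h2

theorem swA2_symm {d : ℕ} {f : SWSpace d → ℝ} (hf : ContDiff ℝ (⊤:ℕ∞) f) (x v w : SWSpace d) :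
    fderiv ℝ (fderiv ℝ f) x v w = fderiv ℝ (fderiv ℝ f) x w v := by
  refine second_derivative_symmetric (x := x)
    (fun y => ((hf.differentiable (by simp)) y).hasFDerivAt) ?_ v w
  exact (((hf.fderiv_right (by simp : ((⊤:ℕ∞):WithTop ℕ∞) + 1 ≤ (⊤:ℕ∞))).differentiable
    (by simp)) x).hasFDerivAt

theorem hasFDerivAt_swπ {d : ℕ} (a b : SWIdx d) (x : SWSpace d) :
    HasFDerivAt (swπ a b) (κ₁ a b • ψL d) x := by
  have : HasFDerivAt (swπ a b) ((0 : SWSpace d →L[ℝ] ℝ) + κ₁ a b • ψL d) x :=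
    (hasFDerivAt_const (κ₀ a b) x).add (((ψL d).hasFDerivAt).const_mul (κ₁ a b))
  simpa using this

theorem fderiv_br_apply {d : ℕ} {g h : SWSpace d → ℝ} (hg : ContDiff ℝ (⊤:ℕ∞) g)
    (hh : ContDiff ℝ (⊤:ℕ∞) h) (x w : SWSpace d) :
    fderiv ℝ (br g h) x w = ∑ a : SWIdx d, ∑ b : SWIdx d,
      (κ₁ a b * w.2.2.2.2 * swD g (swE a) x * swD h (swE b) x +
        swπ a b x * (fderiv ℝ (fderiv ℝ g) x w (swE a) * swD h (swE b) x +
          swD g (swE a) x * fderiv ℝ (fderiv ℝ h) x w (swE b))) := by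
  have H : HasFDerivAt (br g h)
      (∑ a : SWIdx d, ∑ b : SWIdx d,
        ((swπ a b x * swD g (swE a) x) •
            ((ContinuousLinearMap.apply ℝ ℝ (swE b)).comp (fderiv ℝ (fderiv ℝ h) x)) +
          swD h (swE b) x •
            (swπ a b x • ((ContinuousLinearMap.apply ℝ ℝ (swE a)).comp
                (fderiv ℝ (fderiv ℝ g) x)) +
              swD g (swE a) x • (κ₁ a b • ψL d)))) x := by
    apply HasFDerivAt.fun_sum; intro a _
    apply HasFDerivAt.fun_sum; intro b _
    exact ((hasFDerivAt_swπ a b x).mul (hasFDerivAt_swD hg (swE a) x)).mul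
      (hasFDerivAt_swD hh (swE b) x)
  rw [H.fderiv]
  simp only [ContinuousLinearMap.sum_apply, ContinuousLinearMap.add_apply,
    ContinuousLinearMap.smul_apply, ContinuousLinearMap.comp_apply,
    ContinuousLinearMap.apply_apply, smul_eq_mul, ψL_apply]
  refine Finset.sum_congr rfl fun a _ => Finset.sum_congr rfl fun b _ => ?_
  ring

/-- Reindexing a quadruple sum by the permutation `(a,b,c,e) ↦ (e,c,a,b)` of the values. -/
theorem sum4_reindex {α : Type*} [Fintype α] (φ : α → α → α → α → ℝ) :
    (∑ a, ∑ b, ∑ c, ∑ e, φ a b c e) = ∑ a, ∑ b, ∑ c, ∑ e, φ e c a b := by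
  have key : ∀ ψ : α × α × α × α → ℝ,
      (∑ p : α × α × α × α, ψ p) = ∑ a, ∑ b, ∑ c, ∑ e, ψ (a, b, c, e) := by
    intro ψ; simp [Fintype.sum_prod_type]
  rw [← key fun p => φ p.1 p.2.1 p.2.2.1 p.2.2.2,
    ← key fun p => φ p.2.2.2 p.2.2.1 p.1 p.2.1]
  exact Fintype.sum_equiv
    ⟨fun p => (p.2.2.1, p.2.2.2, p.2.1, p.1), fun p => (p.2.2.2, p.2.2.1, p.1, p.2.1),
      fun p => rfl, fun p => rfl⟩
    _ _ (fun p => rfl)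

/-- Expansion of a doubly iterated bracket into second-derivative terms. -/
theorem br_br {d : ℕ} {f g h : SWSpace d → ℝ} (hg : ContDiff ℝ (⊤:ℕ∞) g)
    (hh : ContDiff ℝ (⊤:ℕ∞) h) (x : SWSpace d) :
    br f (br g h) x =
      (∑ a : SWIdx d, ∑ b : SWIdx d, ∑ c : SWIdx d, ∑ e : SWIdx d,
        swπ a b x * swπ c e x * swD f (swE a) x *
          fderiv ℝ (fderiv ℝ g) x (swE b) (swE c) * swD h (swE e) x) +
      (∑ a : SWIdx d, ∑ b : SWIdx d, ∑ c : SWIdx d, ∑ e : SWIdx d,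
        swπ a b x * swπ c e x * swD f (swE a) x * swD g (swE c) x *
          fderiv ℝ (fderiv ℝ h) x (swE b) (swE e)) := by
  rw [← Finset.sum_add_distrib]
  refine Eq.trans (Finset.sum_congr rfl fun a _ => ?_) rfl
  rw [← Finset.sum_add_distrib]
  refine Eq.trans (Finset.sum_congr rfl fun b _ => ?_) rfl
  have : swD (br g h) (swE b) x = fderiv ℝ (br g h) x (swE b) := rfl
  rw [this, fderiv_br_apply hg hh x (swE b), Finset.mul_sum, ← Finset.sum_add_distrib]
  refine Eq.trans (Finset.sum_congr rfl fun c _ => ?_) rfl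
  rw [Finset.mul_sum, ← Finset.sum_add_distrib]
  refine Eq.trans (Finset.sum_congr rfl fun e _ => ?_) rfl
  linear_combination (swD f (swE a) x * swD g (swE c) x * swD h (swE e) x) *
    swπ_mul_key a b c e x

/-- The key cancellation: a `C`-type term equals minus a `B`-type term. -/
theorem Csum_eq {d : ℕ} {u v w : SWSpace d → ℝ} (hw : ContDiff ℝ (⊤:ℕ∞) w) (x : SWSpace d) :
    (∑ a : SWIdx d, ∑ b : SWIdx d, ∑ c : SWIdx d, ∑ e : SWIdx d,
      swπ a b x * swπ c e x * swD u (swE a) x * swD v (swE c) x *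
        fderiv ℝ (fderiv ℝ w) x (swE b) (swE e)) =
    -(∑ a : SWIdx d, ∑ b : SWIdx d, ∑ c : SWIdx d, ∑ e : SWIdx d,
      swπ a b x * swπ c e x * swD v (swE a) x *
        fderiv ℝ (fderiv ℝ w) x (swE b) (swE c) * swD u (swE e) x) := by
  rw [sum4_reindex (fun a b c e => swπ a b x * swπ c e x * swD u (swE a) x * swD v (swE c) x *
    fderiv ℝ (fderiv ℝ w) x (swE b) (swE e))]
  rw [← Finset.sum_neg_distrib]
  refine Finset.sum_congr rfl fun a _ => ?_
  rw [← Finset.sum_neg_distrib]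
  refine Finset.sum_congr rfl fun b _ => ?_
  rw [← Finset.sum_neg_distrib]
  refine Finset.sum_congr rfl fun c _ => ?_
  rw [← Finset.sum_neg_distrib]
  refine Finset.sum_congr rfl fun e _ => ?_
  rw [swA2_symm hw x (swE c) (swE b), swπ_antisymm e c]
  ring

/-- The bracket `{·,·}₂` is antisymmetric and satisfies the Jacobi identity;
hence it is a Poisson bracket. -/
theorem swBr_poisson (d : ℕ) :
    (∀ f g : SWSpace d → ℝ, swBr d f g = fun x => -swBr d g f x) ∧
    (∀ f g h : SWSpace d → ℝ,
      ContDiff ℝ (⊤ : ℕ∞) f → ContDiff ℝ (⊤ : ℕ∞) g → ContDiff ℝ (⊤ : ℕ∞) h →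
      (fun x => swBr d f (swBr d g h) x + swBr d g (swBr d h f) x +
        swBr d h (swBr d f g) x) = fun _ => (0 : ℝ)) := by
  constructor
  · intro f g
    rw [swBr_eq_br f g, swBr_eq_br g f]
    funext x
    show br f g x = -br g f x
    simp only [br]
    rw [Finset.sum_comm, ← Finset.sum_neg_distrib]
    refine Finset.sum_congr rfl fun b _ => ?_
    rw [← Finset.sum_neg_distrib]
    refine Finset.sum_congr rfl fun a _ => ?_
    rw [swπ_antisymm a b]
    ring
  · intro f g h hf hg hh
    have hf' : ContDiff ℝ (⊤:ℕ∞) f := hf.of_le (by simp)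
    have hg' : ContDiff ℝ (⊤:ℕ∞) g := hg.of_le (by simp)
    have hh' : ContDiff ℝ (⊤:ℕ∞) h := hh.of_le (by simp)
    funext x
    simp only [swBr_eq_br]
    rw [br_br hg' hh' x, br_br hh' hf' x, br_br hf' hg' x,
      Csum_eq (u := f) (v := g) hh' x, Csum_eq (u := g) (v := h) hf' x,
      Csum_eq (u := h) (v := f) hg' x]
    ring
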